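/- Let K be a normal subgroup of a finite group G and let x be a small element of G such that [x, K] is a normal subset of K. Then [x, K] ⊆ Z(G), i.e., [x,k] lies in the center of G for every k ∈ K. -/

import Mathlib

/-- The size of the conjugacy class of `x` in `G`. -/
noncomputable def classCard {G : Type*} [Group G] (x : G) : ℕ := Nat.card (conjugatesOf x)

/-- An element `x` is *small* if its conjugacy class size is among the two smallest
conjugacy class sizes of `G`, i.e. at most one conjugacy class size is strictly
smaller than that of `x`. -/
def IsSmall {G : Type*} [Group G] (x : G) : Prop :=
  {n : ℕ | (∃ g : G, classCard g = n) ∧ n < classCard x}.Subsingleton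

/-- `M G` is the subgroup generated by all small elements of `G`. -/
def smallGen (G : Type*) [Group G] : Subgroup G := Subgroup.closure {x : G | IsSmall x}

/-- `[x, K] = {x⁻¹k⁻¹xk : k ∈ K}`. -/
def commSet {G : Type*} [Group G] (x : G) (K : Set G) : Set G :=
  {y | ∃ k ∈ K, y = x⁻¹ * k⁻¹ * x * k}

/-- `[A, x] = {a⁻¹x⁻¹ax : a ∈ A}`. -/
def commSet' {G : Type*} [Group G] (A : Set G) (x : G) : Set G :=
  {y | ∃ a ∈ A, y = a⁻¹ * x⁻¹ * a * x}

/-- `S` is a normal subset of `K`: `k⁻¹Sk = S` for all `k ∈ K`. -/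
def IsNormalSubsetOf {G : Type*} [Group G] (S K : Set G) : Prop :=
  ∀ k ∈ K, (fun s => k⁻¹ * s * k) '' S = S

/-- The Fitting subgroup: the join of all nilpotent normal subgroups (for a finite
group, its largest nilpotent normal subgroup). -/
def fittingSubgroup (G : Type*) [Group G] : Subgroup G :=
  ⨆ H ∈ {H : Subgroup G | H.Normal ∧ Group.IsNilpotent ↥H}, H

/-!
Let `H` be the stabilizer of `S = [x, K]` under conjugation. It contains `K` because `S` is a
normal subset of `K`, and it contains `C_G(x)` because `K` is normal. For `y ∈ S \ {1}` the
`H`-class of `y` lies in `S \ {1}`, whereas `S = x⁻¹ x^K ⊆ x⁻¹ x^H`; hence `|y^H| < |x^H|`.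
As `C_G(x) ≤ H`, this forces `|C_G(y)| > |C_G(x)|`, so the class of `y` is strictly smaller than
that of `x`. The class of `1` is smaller too, and `x` is small, so the class of `y` has size `1`.
-/

open MulAction Pointwise

namespace MulAction

variable {M X : Type*} [Group M] [MulAction M X]

theorem ncard_orbit_subgroup_eq_relIndex (H : Subgroup M) (x : X) :
    (orbit H x).ncard = (stabilizer M x).relIndex H :=
  (index_stabilizer H x).symm

theorem ncard_orbit_lt_of_ncard_orbit_subgroup_lt [Finite M] {H : Subgroup M} {x y : X}
    (hx : stabilizer M x ≤ H) (h : (orbit H y).ncard < (orbit H x).ncard) :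
    (orbit M y).ncard < (orbit M x).ncard := by
  rw [ncard_orbit_subgroup_eq_relIndex, ncard_orbit_subgroup_eq_relIndex] at h
  rw [← index_stabilizer, ← index_stabilizer]
  calc (stabilizer M y).index ≤ (stabilizer M y ⊓ H).index := Subgroup.index_antitone inf_le_left
    _ = (stabilizer M y).relIndex H * H.index := by
      rw [← Subgroup.inf_relIndex_right, Subgroup.relIndex_mul_index inf_le_right]
    _ < (stabilizer M x).relIndex H * H.index :=
      Nat.mul_lt_mul_of_pos_right h (Nat.pos_of_ne_zero H.index_ne_zero_of_finite)
    _ = (stabilizer M x).index := Subgroup.relIndex_mul_index hx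

theorem orbit_stabilizer_set_subset {s : Set X} {y : X} (hy : y ∈ s) :
    orbit (stabilizer M s) y ⊆ s := by
  rintro _ ⟨u, rfl⟩
  have := Set.smul_mem_smul_set (a := (u : M)) hy
  rwa [mem_stabilizer_iff.mp u.2] at this

end MulAction

section ClassSizes

variable {G : Type*} [Group G]

instance ConjAct.finite [Finite G] : Finite (ConjAct G) := ‹Finite G›

theorem classCard_eq_ncard_orbit (g : G) : classCard g = (orbit (ConjAct G) g).ncard := by
  rw [classCard, ← Nat.card_coe_set_eq]
  congr! 2
  ext h
  rw [ConjAct.mem_orbit_conjAct, isConj_comm]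
  rfl

theorem classCard_eq_one_iff [Finite G] {g : G} : classCard g = 1 ↔ g ∈ Subgroup.center G := by
  classical
  have := Fintype.ofFinite G
  rw [classCard_eq_ncard_orbit, ← SetLike.mem_coe, ← ConjAct.fixedPoints_eq_center,
    mem_fixedPoints_iff_card_orbit_eq_one, Set.ncard_eq_toFinset_card', Set.toFinset_card]

theorem mem_center_of_classCard_lt [Finite G] {x y : G} (hx : IsSmall x)
    (hxy : classCard y < classCard x) : y ∈ Subgroup.center G := by
  have hpos : 0 < classCard y := by
    rw [classCard_eq_ncard_orbit]; exact (Set.ncard_pos (Set.toFinite _)).2 ⟨y, mem_orbit_self y⟩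
  by_contra hy
  have hy1 : classCard y ≠ 1 := mt classCard_eq_one_iff.mp hy
  exact hy1 (hx ⟨⟨y, rfl⟩, hxy⟩ ⟨⟨1, classCard_eq_one_iff.2 (Subgroup.one_mem _)⟩, by omega⟩)

theorem commSet_smul_subset (K : Subgroup G) [K.Normal] (x : G) (u : ConjAct G) :
    u • commSet x (K : Set G) ⊆ commSet (u • x) (K : Set G) := by
  rintro _ ⟨_, ⟨k, hk, rfl⟩, rfl⟩
  refine ⟨u • k, ?_, by simp only [smul_mul', smul_inv']⟩
  rw [ConjAct.smul_def]
  exact ‹K.Normal›.conj_mem k hk _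

theorem toConjAct_mem_stabilizer {S : Set G} {K : Subgroup G} (hS : IsNormalSubsetOf S K)
    {k : G} (hk : k ∈ K) : ConjAct.toConjAct k ∈ stabilizer (ConjAct G) S := by
  simpa [mem_stabilizer_iff, ← Set.image_smul, ConjAct.toConjAct_smul] using hS k⁻¹ (K.inv_mem hk)

theorem stabilizer_le_stabilizer_commSet [Finite G] (K : Subgroup G) [K.Normal] (x : G) :
    stabilizer (ConjAct G) x ≤ stabilizer (ConjAct G) (commSet x (K : Set G)) := fun u hu => by
  rw [mem_stabilizer_set_iff_smul_set_subset (Set.toFinite _)]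
  simpa only [mem_stabilizer_iff.mp hu] using commSet_smul_subset K x u

theorem ncard_commSet_le_ncard_orbit [Finite G] {K : Subgroup G} {H : Subgroup (ConjAct G)}
    (hKH : ∀ k ∈ K, ConjAct.toConjAct k ∈ H) (x : G) :
    (commSet x (K : Set G)).ncard ≤ (orbit H x).ncard := by
  rw [← Set.ncard_smul_set x⁻¹ (orbit H x)]
  refine Set.ncard_le_ncard ?_ (Set.toFinite _)
  rintro _ ⟨k, hk, rfl⟩
  refine ⟨_, ⟨⟨ConjAct.toConjAct k⁻¹, hKH _ (K.inv_mem hk)⟩, rfl⟩, ?_⟩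
  simp only [Subgroup.smul_def, ConjAct.toConjAct_smul, smul_eq_mul, inv_inv, mul_assoc]

theorem ncard_orbit_lt_ncard_commSet [Finite G] {K : Subgroup G} {x y : G}
    (hy : y ∈ commSet x (K : Set G)) (hy1 : y ≠ 1) :
    (orbit (stabilizer (ConjAct G) (commSet x (K : Set G))) y).ncard
      < (commSet x (K : Set G)).ncard := by
  refine Set.ncard_lt_ncard ((Set.ssubset_iff_of_subset (orbit_stabilizer_set_subset hy)).2
    ⟨1, ⟨1, K.one_mem, by group⟩, ?_⟩) (Set.toFinite _)
  rintro ⟨u, hu⟩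
  exact hy1 ((smul_left_cancel_iff (u : ConjAct G)).mp (hu.trans (smul_one _).symm))

end ClassSizes

/-- Let `K` be a normal subgroup of a finite group `G` and `x` a small element of `G`
such that `[x, K]` is a normal subset of `K`. Then `[x, K] ⊆ Z(G)`. -/
theorem stmt_8 {G : Type*} [Group G] [Finite G] (K : Subgroup G) (hK : K.Normal)
    (x : G) (hx : IsSmall x)
    (hns : IsNormalSubsetOf (commSet x (K : Set G)) (K : Set G)) :
    commSet x (K : Set G) ⊆ (Subgroup.center G : Set G) := by
  intro y hy
  by_cases hy1 : y = 1
  · exact hy1 ▸ (Subgroup.center G).one_mem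
  refine mem_center_of_classCard_lt hx ?_
  rw [classCard_eq_ncard_orbit, classCard_eq_ncard_orbit]
  refine ncard_orbit_lt_of_ncard_orbit_subgroup_lt (stabilizer_le_stabilizer_commSet K x) ?_
  calc _ < (commSet x (K : Set G)).ncard := ncard_orbit_lt_ncard_commSet hy hy1
    _ ≤ _ := ncard_commSet_le_ncard_orbit (fun _ hk => toConjAct_mem_stabilizer hns hk) x
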